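/- Suppose G is a chordal graph with evaporation sequence L₁, …, L_t and exception set X (a clique), where t ≥ 2, and suppose X ∪ L_t is a clique. Suppose that at most one connected component C of G[L_{t−1}] satisfies N_G(v) ∩ (X ∪ L_t) = X ∪ L_t for the vertices v ∈ C. Then for every u ∈ L_t there exist a connected component C of G[L_{t−1}] and a vertex v ∈ C such that u is adjacent to v and N_G(v) ∩ (X ∪ L_t) is a proper subset of X ∪ L_t. -/

import Mathlib

/-- A graph is chordal if it contains no induced cycle of length at least 4. -/
def IsChordal {V : Type*} (G : SimpleGraph V) : Prop :=
  ∀ n : ℕ, 4 ≤ n → IsEmpty (SimpleGraph.cycleGraph n ↪g G)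

/-- The neighborhood of `v` inside the induced subgraph of `G` on the vertex set `R`. -/
def nbhdIn {V : Type*} (G : SimpleGraph V) (R : Set V) (v : V) : Set V :=
  {u | u ∈ R ∧ G.Adj u v}

/-- `v` is simplicial in the induced subgraph of `G` on `R`:
its neighborhood there is a clique. -/
def SimplicialIn {V : Type*} (G : SimpleGraph V) (R : Set V) (v : V) : Prop :=
  G.IsClique (nbhdIn G R v)

/-- The set of vertices remaining after `n` steps of the evaporation process of `G` with
exception set `X`: at each step all simplicial vertices of the current induced subgraph that
are not in `X` are removed. -/
def evapR {V : Type*} (G : SimpleGraph V) (X : Set V) : ℕ → Set V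
  | 0 => Set.univ
  | n + 1 =>
      evapR G X n \ {v | v ∈ evapR G X n ∧ v ∉ X ∧ SimplicialIn G (evapR G X n) v}

/-- The `i`-th set `L_i` of the evaporation sequence (for `i ≥ 1`): the vertices removed at
step `i` of the evaporation process. -/
def evapLayer {V : Type*} (G : SimpleGraph V) (X : Set V) (i : ℕ) : Set V :=
  evapR G X (i - 1) \ evapR G X i

/-- The evaporation time of `G` with exception set `X`: the length `t` of the evaporation
sequence, i.e. the least `t` with `evapR G X t = X`. -/
noncomputable def evapTime {V : Type*} (G : SimpleGraph V) (X : Set V) : ℕ :=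
  sInf {t | evapR G X t = X}

/-- The evaporation time of a vertex subset `S`: the largest index `i` such that
`L_i ∩ S ≠ ∅`. -/
noncomputable def evapTimeOf {V : Type*} (G : SimpleGraph V) (X S : Set V) : ℕ :=
  sSup {i | (evapLayer G X i ∩ S).Nonempty}

/-- `C` is a connected component of the induced subgraph of `G` on `S`:
a maximal subset of `S` inducing a connected subgraph. -/
def IsCompOf {V : Type*} (G : SimpleGraph V) (S C : Set V) : Prop :=
  C.Nonempty ∧ C ⊆ S ∧ (G.induce C).Connected ∧
    ∀ D, C ⊆ D → D ⊆ S → (G.induce D).Connected → D = C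

/-- The open neighborhood `N(S)` of a set of vertices. -/
def setNbhd {V : Type*} (G : SimpleGraph V) (S : Set V) : Set V :=
  {v | v ∉ S ∧ ∃ u ∈ S, G.Adj u v}

/-!
Write `R_i = evapR G X i`, so `R_{t-2} = L_{t-1} ∪ (X ∪ L_t)` with `X ∪ L_t = R_{t-1}` a clique
and every vertex of `L_{t-1}` simplicial in `G[R_{t-2}]`. As `u ∈ L_t` survived step `t - 1`,
it has two non-adjacent neighbours `a, b` in `R_{t-2}`. If every neighbour of `u` in `L_{t-1}`
saw all of `X ∪ L_t`, the clique would force `a, b ∈ L_{t-1}`. A simplicial vertex `a` spans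
its component `{a} ∪ N(a)` of `G[L_{t-1}]`, and simpliciality passes "sees all of `X ∪ L_t`"
from `a` to that whole component; uniqueness of such a component then makes `a, b` adjacent.
-/

section Components

variable {V : Type*} (G : SimpleGraph V)

lemma isCompOf_of_adj_mem {S C : Set V} (hCS : C ⊆ S) (hconn : (G.induce C).Connected)
    (hclosed : ∀ w ∈ C, ∀ z ∈ S, G.Adj w z → z ∈ C) : IsCompOf G S C := by
  obtain ⟨⟨a, haC⟩⟩ := hconn.nonempty
  refine ⟨⟨a, haC⟩, hCS, hconn, fun D hCD hDS hD => (Set.Subset.antisymm (fun d hd => ?_) hCD)⟩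
  have walk_mem : ∀ (x y : D), (G.induce D).Walk x y → ↑x ∈ C → ↑y ∈ C := by
    intro x y p
    induction p with
    | nil => exact id
    | cons h _ ih => exact fun hx => ih (hclosed _ hx _ (hDS (Subtype.coe_prop _)) h)
  obtain ⟨p⟩ := hD.preconnected ⟨a, hCD haC⟩ ⟨d, hd⟩
  exact walk_mem _ _ p haC

lemma induce_insert_nbhdIn_connected (S : Set V) (a : V) :
    (G.induce (insert a (nbhdIn G S a))).Connected := by
  have : Nonempty ↥(insert a (nbhdIn G S a)) := ⟨⟨a, Set.mem_insert a _⟩⟩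
  have reach_center : ∀ x : ↥(insert a (nbhdIn G S a)),
      (G.induce (insert a (nbhdIn G S a))).Reachable ⟨a, Set.mem_insert a _⟩ x := by
    rintro ⟨x, rfl | hx⟩
    · rfl
    · exact SimpleGraph.Adj.reachable (G := G.induce _) (v := ⟨x, Or.inr hx⟩) hx.2.symm
  exact ⟨fun x y => (reach_center x).symm.trans (reach_center y)⟩

variable {G}

lemma isCompOf_insert_nbhdIn {R S : Set V} (hSR : S ⊆ R) (hS : ∀ v ∈ S, SimplicialIn G R v)
    {a : V} (ha : a ∈ S) : IsCompOf G S (insert a (nbhdIn G S a)) := by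
  refine isCompOf_of_adj_mem G (Set.insert_subset ha fun w hw => hw.1)
    (induce_insert_nbhdIn_connected G S a) ?_
  rintro w (rfl | ⟨hwS, hwa⟩) z hzS hwz
  · exact Or.inr ⟨hzS, hwz.symm⟩
  · rcases eq_or_ne z a with rfl | hza
    · exact Set.mem_insert z _
    · exact Or.inr ⟨hzS, hS w hwS ⟨hSR hzS, hwz.symm⟩ ⟨hSR ha, hwa.symm⟩ hza⟩

lemma subset_neighborSet_of_simplicialIn {R T : Set V} {c w : V} (hc : SimplicialIn G R c)
    (hTR : T ⊆ R) (hTc : T ⊆ G.neighborSet c) (hw : w ∈ R) (hcw : G.Adj c w) (hwT : w ∉ T) :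
    T ⊆ G.neighborSet w := fun _ hx =>
  (hc ⟨hTR hx, (hTc hx).symm⟩ ⟨hw, hcw.symm⟩ fun h => hwT (h ▸ hx)).symm

variable {R S T : Set V} (hSR : S ⊆ R) (hTR : T ⊆ R) (hST : Disjoint S T)
  (hS : ∀ v ∈ S, SimplicialIn G R v)
  (huniq : ∀ C₁ C₂ : Set V, IsCompOf G S C₁ → IsCompOf G S C₂ →
    (∀ v ∈ C₁, T ⊆ G.neighborSet v) → (∀ v ∈ C₂, T ⊆ G.neighborSet v) → C₁ = C₂)
include hSR hTR hST hS huniq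

lemma eq_or_adj_of_subset_neighborSet {a b : V} (ha : a ∈ S) (hb : b ∈ S)
    (hTa : T ⊆ G.neighborSet a) (hTb : T ⊆ G.neighborSet b) : b = a ∨ G.Adj b a := by
  have comp_sees_T : ∀ c ∈ S, T ⊆ G.neighborSet c →
      ∀ w ∈ insert c (nbhdIn G S c), T ⊆ G.neighborSet w := by
    rintro c hc hTc w (rfl | ⟨hwS, hwc⟩)
    · exact hTc
    · exact subset_neighborSet_of_simplicialIn (hS c hc) hTR hTc (hSR hwS) hwc.symm
        (hST.notMem_of_mem_left hwS)
  have hab := huniq _ _ (isCompOf_insert_nbhdIn hSR hS ha) (isCompOf_insert_nbhdIn hSR hS hb)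
    (comp_sees_T a ha hTa) (comp_sees_T b hb hTb)
  have hb' : b ∈ insert a (nbhdIn G S a) := hab ▸ Set.mem_insert b _
  exact hb'.imp_right And.right

lemma exists_adj_not_subset_neighborSet (hR : R ⊆ T ∪ S) (hT : G.IsClique T) {u : V}
    (hu : ¬ SimplicialIn G R u) : ∃ v ∈ S, G.Adj u v ∧ ¬ T ⊆ G.neighborSet v := by
  by_contra! hfull
  obtain ⟨a, ⟨haR, hau⟩, b, ⟨hbR, hbu⟩, hab, hnadj⟩ : ∃ a ∈ nbhdIn G R u, ∃ b ∈ nbhdIn G R u,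
      a ≠ b ∧ ¬ G.Adj a b := by
    simpa [SimplicialIn, SimpleGraph.IsClique, Set.Pairwise] using hu
  rcases hR haR with haT | haS <;> rcases hR hbR with hbT | hbS
  · exact hnadj (hT haT hbT hab)
  · exact hnadj (hfull b hbS hbu.symm haT).symm
  · exact hnadj (hfull a haS hau.symm hbT)
  · rcases eq_or_adj_of_subset_neighborSet hSR hTR hST hS huniq haS hbS
      (hfull a haS hau.symm) (hfull b hbS hbu.symm) with rfl | hba
    · exact hab rfl
    · exact hnadj hba.symm

end Components

section Evaporation

variable {V : Type*} (G : SimpleGraph V) (X : Set V)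

lemma subset_evapR : ∀ n, X ⊆ evapR G X n
  | 0 => Set.subset_univ X
  | n + 1 => fun _ hv => ⟨subset_evapR n hv, fun h => h.2.1 hv⟩

lemma evapR_succ_subset (n : ℕ) : evapR G X (n + 1) ⊆ evapR G X n := Set.sdiff_subset

lemma evapR_succ_union_evapLayer (n : ℕ) :
    evapR G X (n + 1) ∪ evapLayer G X (n + 1) = evapR G X n :=
  Set.union_sdiff_cancel (evapR_succ_subset G X n)

lemma evapLayer_succ (n : ℕ) : evapLayer G X (n + 1) =
    {v | v ∈ evapR G X n ∧ v ∉ X ∧ SimplicialIn G (evapR G X n) v} :=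
  Set.sdiff_sdiff_cancel_left fun _ hv => hv.1

lemma not_simplicialIn_of_mem_evapR_succ {n : ℕ} {u : V} (hu : u ∈ evapR G X (n + 1))
    (huX : u ∉ X) : ¬ SimplicialIn G (evapR G X n) u :=
  fun hs => hu.2 ⟨hu.1, huX, hs⟩

lemma evapR_evapTime (h : 0 < evapTime G X) : evapR G X (evapTime G X) = X :=
  Nat.sInf_mem (Nat.nonempty_of_pos_sInf h)

lemma union_evapLayer_eq_evapR {n : ℕ} (h : evapR G X (n + 1) = X) :
    X ∪ evapLayer G X (n + 1) = evapR G X n := by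
  rw [evapLayer, Nat.add_sub_cancel, h]
  exact Set.union_sdiff_cancel (subset_evapR G X n)

end Evaporation

theorem set_cover_last_layer_general {V : Type*} (G : SimpleGraph V) (X : Set V)
    (t : ℕ) (htdef : evapTime G X = t) (ht : 2 ≤ t)
    (hXL : G.IsClique (X ∪ evapLayer G X t))
    (huniq : ∀ C₁ C₂ : Set V,
      IsCompOf G (evapLayer G X (t - 1)) C₁ → IsCompOf G (evapLayer G X (t - 1)) C₂ →
      (∀ v ∈ C₁, X ∪ evapLayer G X t ⊆ G.neighborSet v) →
      (∀ v ∈ C₂, X ∪ evapLayer G X t ⊆ G.neighborSet v) → C₁ = C₂) :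
    ∀ u ∈ evapLayer G X t, ∃ C : Set V, IsCompOf G (evapLayer G X (t - 1)) C ∧
      ∃ v ∈ C, G.Adj u v ∧
        G.neighborSet v ∩ (X ∪ evapLayer G X t) ⊂ X ∪ evapLayer G X t := by
  rintro u ⟨huR, huX⟩
  obtain ⟨n, rfl⟩ : ∃ n, t = n + 2 := ⟨t - 2, by omega⟩
  have hRt : evapR G X (n + 2) = X := htdef ▸ evapR_evapTime G X (by omega)
  rw [hRt] at huX
  rw [show n + 2 - 1 = n + 1 from rfl] at huR huniq ⊢
  rw [union_evapLayer_eq_evapR G X hRt] at hXL huniq ⊢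
  have hS : ∀ v ∈ evapLayer G X (n + 1), SimplicialIn G (evapR G X n) v := by
    rw [evapLayer_succ]
    exact fun v hv => hv.2.2
  obtain ⟨v, hvS, huv, hvT⟩ := exists_adj_not_subset_neighborSet Set.sdiff_subset
    (evapR_succ_subset G X n) Set.disjoint_sdiff_left hS huniq
    (evapR_succ_union_evapLayer G X n).ge hXL (not_simplicialIn_of_mem_evapR_succ G X huR huX)
  exact ⟨_, isCompOf_insert_nbhdIn Set.sdiff_subset hS hvS, v, Set.mem_insert v _, huv,
    Set.inter_ssubset_right_iff.mpr hvT⟩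

/-- Suppose `G` is chordal with evaporation sequence `L₁, …, L_t` and
exception set `X` (a clique), where `t ≥ 2`, and `X ∪ L_t` is a clique. If at most one
connected component `C` of `G[L_{t-1}]` satisfies `N_G(v) ∩ (X ∪ L_t) = X ∪ L_t` for the
vertices `v ∈ C`, then for every `u ∈ L_t` there exist a connected component `C` of
`G[L_{t-1}]` and a vertex `v ∈ C` adjacent to `u` with
`N_G(v) ∩ (X ∪ L_t) ⊊ X ∪ L_t`. -/
theorem set_cover_last_layer {V : Type*} [Fintype V] (G : SimpleGraph V) (X : Set V)
    (hch : IsChordal G) (hX : G.IsClique X)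
    (t : ℕ) (htdef : evapTime G X = t) (ht : 2 ≤ t)
    (hXL : G.IsClique (X ∪ evapLayer G X t))
    (huniq : ∀ C₁ C₂ : Set V,
      IsCompOf G (evapLayer G X (t - 1)) C₁ → IsCompOf G (evapLayer G X (t - 1)) C₂ →
      (∀ v ∈ C₁, X ∪ evapLayer G X t ⊆ G.neighborSet v) →
      (∀ v ∈ C₂, X ∪ evapLayer G X t ⊆ G.neighborSet v) → C₁ = C₂) :
    ∀ u ∈ evapLayer G X t, ∃ C : Set V, IsCompOf G (evapLayer G X (t - 1)) C ∧
      ∃ v ∈ C, G.Adj u v ∧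
        G.neighborSet v ∩ (X ∪ evapLayer G X t) ⊂ X ∪ evapLayer G X t :=
  set_cover_last_layer_general G X t htdef ht hXL huniq
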